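/- arXiv:1311.3707 — 4 statements merged into one kernel-verified Lean document; each statement's English description precedes it below -/
import Mathlib

section
/- Let p be a prime with p ≡ 3 (mod 4) and K = ℚ(p^{1/4}). Then the prime 2 is totally ramified in K/ℚ, i.e., there is a unique prime ideal of the ring of integers of K above 2, and its ramification index is 4. -/
open NumberField IntermediateField Polynomial Module

lemma irr_X4_sub_p (p : ℕ) (hp : p.Prime) :
    Irreducible ((X ^ 4 - C (p : ℚ)) : ℚ[X]) := by
  have hmonic : ((X ^ 4 - C (p : ℤ)) : ℤ[X]).Monic := monic_X_pow_sub_C _ (by norm_num)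
  have hdeg : ((X ^ 4 - C (p : ℤ)) : ℤ[X]).degree = 4 := degree_X_pow_sub_C (by norm_num) _
  have hirr : Irreducible ((X ^ 4 - C (p : ℤ)) : ℤ[X]) := by
    apply irreducible_of_eisenstein_criterion (P := Ideal.span {(p : ℤ)})
    · rw [Ideal.span_singleton_prime (by exact_mod_cast hp.ne_zero)]
      exact Nat.prime_iff_prime_int.mp hp
    · rw [hmonic.leadingCoeff, Ideal.mem_span_singleton]
      exact fun h => hp.one_lt.ne' (by exact_mod_cast Int.eq_one_of_dvd_one (by positivity) h)
    · intro n hn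
      rw [hdeg] at hn
      norm_cast at hn
      interval_cases n <;>
        simp [coeff_X_pow, Ideal.mem_span_singleton, dvd_neg]
    · rw [hdeg]; norm_num
    · rw [Ideal.span_singleton_pow, Ideal.mem_span_singleton]
      simp only [coeff_sub, coeff_X_pow, coeff_C]
      norm_num
      intro h
      have := Int.le_of_dvd (by exact_mod_cast hp.pos) h
      nlinarith [hp.two_le, (show ((p:ℤ))^2 = (p:ℤ)*(p:ℤ) by ring)]
    · exact hmonic.isPrimitive
  have := (hmonic.irreducible_iff_irreducible_map_fraction_map (K := ℚ)).mp hirr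
  simpa [Polynomial.map_sub, Polynomial.map_pow] using this

set_option maxHeartbeats 1600000 in
theorem two_totally_ramified_in_pure_quartic
    (p : ℕ) (hp : p.Prime) (hp4 : p % 4 = 3)
    (K : IntermediateField ℚ ℝ)
    (hK : K = IntermediateField.adjoin ℚ {((p : ℝ) ^ ((1 : ℝ) / 4))})
    [NumberField K] :
    ∃ P : Ideal (𝓞 K), P.IsMaximal ∧
      Ideal.span {(2 : 𝓞 K)} = P ^ 4 ∧
      ∀ Q : Ideal (𝓞 K), Q.IsMaximal → (2 : 𝓞 K) ∈ Q → Q = P := by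
  subst hK
  set θ : ℝ := (p : ℝ) ^ ((1 : ℝ) / 4) with hθ
  set K := IntermediateField.adjoin ℚ {θ} with hKdef
  have hp0 : (0:ℝ) ≤ (p:ℝ) := by positivity
  have hθ4 : θ ^ 4 = (p : ℝ) := by
    rw [hθ, ← Real.rpow_natCast ((p:ℝ) ^ ((1:ℝ)/4)) 4, ← Real.rpow_mul hp0]
    norm_num
  have haev : (Polynomial.aeval θ) ((X ^ 4 - C ((p:ℕ) : ℚ)) : ℚ[X]) = 0 := by
    simp [hθ4]
  have hint : IsIntegral ℚ θ :=
    ⟨X ^ 4 - C ((p:ℕ):ℚ), monic_X_pow_sub_C _ (by norm_num), by simpa using haev⟩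
  have hmin : minpoly ℚ θ = X ^ 4 - C ((p:ℕ):ℚ) :=
    (minpoly.eq_of_irreducible_of_monic (irr_X4_sub_p p hp) haev
      (monic_X_pow_sub_C _ (by norm_num))).symm
  have hrank : finrank ℚ K = 4 := by
    rw [show K = ℚ⟮θ⟯ from rfl, adjoin.finrank hint, hmin]
    compute_degree!
  -- the element t = θ in 𝓞 K
  have hmem : θ ∈ K := subset_adjoin ℚ _ rfl
  have ht4K : (⟨θ, hmem⟩ : K) ^ 4 = ((p : ℕ) : K) := by
    ext
    push_cast
    exact hθ4
  have htint : IsIntegral ℤ (⟨θ, hmem⟩ : K) := by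
    refine ⟨X ^ 4 - C ((p:ℕ):ℤ), monic_X_pow_sub_C _ (by norm_num), ?_⟩
    simp [ht4K]
  set t : 𝓞 K := ⟨⟨θ, hmem⟩, htint⟩ with htdef
  have ht4 : t ^ 4 = ((p : ℕ) : 𝓞 K) := by
    apply NumberField.RingOfIntegers.ext
    push_cast
    exact ht4K
  -- arithmetic setup
  obtain ⟨k, hk⟩ : ∃ k, p = 4*k+3 := ⟨p/4, by omega⟩
  have h2m : (2 : 𝓞 K) * ((2*k+1 : ℕ) : 𝓞 K) = ((p:ℕ) : 𝓞 K) - 1 := by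
    have hpk : ((p:ℕ) : 𝓞 K) = ((4*k+3 : ℕ) : 𝓞 K) := by rw [← hk]
    rw [hpk]; push_cast; ring
  set π : 𝓞 K := t + 1 with hπ
  set w : 𝓞 K := 2*π^3 - 3*π^2 + 2*π + ((2*k+1 : ℕ) : 𝓞 K) with hwdef
  have hπw : π ^ 4 = 2 * w := by
    rw [hwdef, hπ]
    linear_combination ht4 - h2m
  -- absolute norm of (2)
  have habs : Ideal.absNorm (Ideal.span {(2 : 𝓞 K)}) = 16 := by
    rw [Ideal.absNorm_span_singleton]
    have h2alg : (2 : 𝓞 K) = algebraMap ℤ (𝓞 K) 2 := by norm_num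
    rw [h2alg, Algebra.norm_algebraMap_of_basis (NumberField.RingOfIntegers.basis K)]
    rw [← Module.finrank_eq_card_chooseBasisIndex, NumberField.RingOfIntegers.rank, hrank]
    norm_num
  have h2ne : (Ideal.span {(2 : 𝓞 K)}) ≠ ⊤ := by
    intro h
    rw [Ideal.absNorm_eq_one_iff.mpr h] at habs
    omega
  obtain ⟨P, hPmax, hle⟩ := Ideal.exists_le_maximal _ h2ne
  have h2P : (2 : 𝓞 K) ∈ P := hle (Ideal.subset_span rfl)
  have hπP : π ∈ P := by
    have h4 : π ^ 4 ∈ P := by rw [hπw]; exact Ideal.mul_mem_right _ _ h2P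
    exact hPmax.isPrime.mem_of_pow_mem _ h4
  have hw : w ∉ P := by
    intro hwm
    have hmP : ((2*k+1 : ℕ) : 𝓞 K) ∈ P := by
      have hrw : ((2*k+1 : ℕ) : 𝓞 K) = w - π*(2*π^2 - 3*π + 2) := by rw [hwdef]; ring
      rw [hrw]
      exact Ideal.sub_mem _ hwm (Ideal.mul_mem_right _ _ hπP)
    have h1 : (1 : 𝓞 K) ∈ P := by
      have hrw : (1 : 𝓞 K) = ((2*k+1 : ℕ) : 𝓞 K) - 2 * (k : 𝓞 K) := by push_cast; ring
      rw [hrw]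
      exact Ideal.sub_mem _ hmP (Ideal.mul_mem_right _ _ h2P)
    exact hPmax.ne_top ((Ideal.eq_top_iff_one P).mpr h1)
  have hPbot : P ≠ ⊥ := by
    intro h
    rw [h] at h2P
    simp at h2P
  have hPprime : Prime P := Ideal.prime_of_isPrime hPbot hPmax.isPrime
  have hdvd : P ^ 4 ∣ Ideal.span {(2 : 𝓞 K)} := by
    have h1 : P ^ 4 ∣ Ideal.span {π} ^ 4 :=
      pow_dvd_pow_of_dvd (Ideal.dvd_iff_le.mpr ((Ideal.span_singleton_le_iff_mem _).mpr hπP)) 4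
    have h2 : Ideal.span {π} ^ 4 = Ideal.span {(2 : 𝓞 K)} * Ideal.span {w} := by
      rw [Ideal.span_singleton_pow, hπw, Ideal.span_singleton_mul_span_singleton]
    have h3 : ¬ P ∣ Ideal.span {w} := by
      rw [Ideal.dvd_iff_le, Ideal.span_singleton_le_iff_mem]
      exact hw
    rw [h2] at h1
    exact hPprime.pow_dvd_of_dvd_mul_right 4 h3 h1
  obtain ⟨J, hJ⟩ := hdvd
  have hnorm : (Ideal.absNorm P)^4 * Ideal.absNorm J = 16 := by
    rw [← habs, hJ, map_mul, map_pow]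
  have hP2 : 2 ≤ Ideal.absNorm P := by
    have h1 : Ideal.absNorm P ≠ 1 := fun h => hPmax.ne_top (Ideal.absNorm_eq_one_iff.mp h)
    have h0 : Ideal.absNorm P ≠ 0 := fun h => hPbot (Ideal.absNorm_eq_zero_iff.mp h)
    omega
  have hJ0 : Ideal.absNorm J ≠ 0 := by
    intro h; rw [h] at hnorm; omega
  have hJtop : J = ⊤ := by
    have hle16 : (Ideal.absNorm P)^4 ≤ 16 := by
      calc (Ideal.absNorm P)^4 ≤ (Ideal.absNorm P)^4 * Ideal.absNorm J :=
            Nat.le_mul_of_pos_right _ (Nat.pos_of_ne_zero hJ0)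
        _ = 16 := hnorm
    have hPle : Ideal.absNorm P ≤ 2 := by
      by_contra h
      have h3 : 3 ≤ Ideal.absNorm P := by omega
      have := Nat.pow_le_pow_left h3 4
      omega
    have hPeq : Ideal.absNorm P = 2 := le_antisymm hPle hP2
    rw [hPeq] at hnorm
    have hJ1 : Ideal.absNorm J = 1 := by omega
    exact Ideal.absNorm_eq_one_iff.mp hJ1
  have hspan : Ideal.span {(2 : 𝓞 K)} = P ^ 4 := by
    rw [hJ, hJtop, Ideal.mul_top]
  refine ⟨P, hPmax, hspan, fun Q hQ h2Q => ?_⟩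
  have hPQ : P ≤ Q := by
    have : P ^ 4 ≤ Q := by
      rw [← hspan]
      exact (Ideal.span_singleton_le_iff_mem _).mpr h2Q
    exact hQ.isPrime.le_of_pow_le this
  exact ((hPmax.eq_of_le hQ.ne_top hPQ)).symm
end

section
/- Let d be an odd square-free integer, F = ℚ(√d), K = ℚ(d^{1/4}). Let f(x) = x² + A₁x + A₀ ∈ O_F[x] and α ∈ ℂ with f(α) = 0, and set Δ = A₁² - 4A₀. Then α ∈ O_K if and only if there exists C ∈ O_F such that Δ = C² or Δ = C²√d. Moreover, in the first case α ∈ O_F, and in the second case α ∈ O_K \ O_F. -/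
/-!
Put `β = 2α + A₁`, so that `β² = Δ`, both `α` and `β` are integral, and `α ∈ E ↔ β ∈ E` for
every field `E ⊇ F`. Every element of `K = F(t)` has the form `a + b t` with `a, b ∈ F`, and if
its square lies in `F` then `a b = 0`. Hence `β ∈ F`, or `β = b t` with `b ∈ F`, in which case
`b² √d = Δ` is integral. Writing `b = u + v √d`, `b` is integral iff `2u` and `u² - d v²` are
integers, and squarefreeness of `d` extracts exactly these two conditions from the integrality
of `b² √d`.
-/

open Polynomial IntermediateField

theorem isIntegral_of_sq_add_mul_add_eq_zero {R A : Type*} [CommRing R] [CommRing A]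
    [Algebra R A] {a b x : A} (ha : IsIntegral R a) (hb : IsIntegral R b)
    (hx : x ^ 2 + a * x + b = 0) : IsIntegral R x := by
  have : IsIntegral (integralClosure R A) x := by
    refine ⟨X ^ 2 + C ⟨a, ha⟩ * X + C ⟨b, hb⟩, by monicity!, ?_⟩
    simpa [← aeval_def] using hx
  exact isIntegral_trans x this

theorem Squarefree.isIntegral_of_isIntegral_mul_sq {d : ℤ} (hd : Squarefree d) {q : ℚ}
    (h : IsIntegral ℤ (d * q ^ 2)) : IsIntegral ℤ q := by
  obtain ⟨m, hm⟩ := IsIntegrallyClosed.isIntegral_iff.mp h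
  have hdq : IsIntegral ℤ ((d * q) ^ 2) := by
    rw [show ((d : ℚ) * q) ^ 2 = d * (d * q ^ 2) by ring]
    exact isIntegral_algebraMap.mul h
  obtain ⟨k, hk⟩ := IsIntegrallyClosed.isIntegral_iff.mp (hdq.of_pow two_pos)
  simp only [algebraMap_int_eq, eq_intCast] at hm hk
  obtain ⟨j, rfl⟩ : d ∣ k := (hd.dvd_pow_iff_dvd two_ne_zero).mp
    ⟨m, by exact_mod_cast (show (k : ℚ) ^ 2 = d * m by rw [hk, hm]; ring)⟩
  have hd0 : (d : ℚ) ≠ 0 := by exact_mod_cast hd.ne_zero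
  rw [show q = j by push_cast at hk; exact (mul_left_cancel₀ hd0 hk).symm]
  exact isIntegral_algebraMap

theorem Squarefree.eq_one_of_sq_eq {d : ℤ} (hd : Squarefree d) {q : ℚ} (hq : q ^ 2 = d) :
    d = 1 := by
  obtain ⟨n, rfl⟩ := IsIntegrallyClosed.isIntegral_iff.mp
    ((hq ▸ isIntegral_algebraMap : IsIntegral ℤ (q ^ 2)).of_pow two_pos)
  have hn : n ^ 2 = d := by simp only [algebraMap_int_eq, eq_intCast] at hq; exact_mod_cast hq
  rw [← hn, Int.isUnit_sq (hd n ⟨1, by rw [← hn]; ring⟩)]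

theorem mem_of_sq_eq_sq {R S : Type*} [CommRing R] [NoZeroDivisors R] [SetLike S R]
    [NegMemClass S R] {s : S} {x y : R} (hy : y ∈ s) (h : x ^ 2 = y ^ 2) : x ∈ s := by
  rcases sq_eq_sq_iff_eq_or_eq_neg.mp h with rfl | rfl
  exacts [hy, neg_mem hy]

section AdjoinSqrt

variable {K L : Type*} [Field K] [Field L] [Algebra K L]

theorem IntermediateField.exists_eq_add_mul_of_mem_adjoin_simple {E : IntermediateField K L}
    {t z : L} (ht : IsIntegral K t) (ht2 : t ^ 2 ∈ E) (hz : z ∈ K⟮t⟯) :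
    ∃ a ∈ E, ∃ b ∈ E, z = a + b * t := by
  rw [← mem_toSubalgebra, adjoin_simple_toSubalgebra_of_isAlgebraic ht.isAlgebraic] at hz
  induction hz using Algebra.adjoin_induction with
  | mem x hx =>
    exact ⟨0, zero_mem E, 1, one_mem E, by rw [Set.mem_singleton_iff.mp hx]; ring⟩
  | algebraMap r => exact ⟨_, E.algebraMap_mem r, 0, zero_mem E, by ring⟩
  | add x y _ _ hx hy =>
    obtain ⟨a, ha, b, hb, rfl⟩ := hx
    obtain ⟨c, hc, e, he, rfl⟩ := hy
    exact ⟨a + c, add_mem ha hc, b + e, add_mem hb he, by ring⟩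
  | mul x y _ _ hx hy =>
    obtain ⟨a, ha, b, hb, rfl⟩ := hx
    obtain ⟨c, hc, e, he, rfl⟩ := hy
    exact ⟨a * c + b * e * t ^ 2, add_mem (mul_mem ha hc) (mul_mem (mul_mem hb he) ht2),
      a * e + b * c, add_mem (mul_mem ha he) (mul_mem hb hc), by ring⟩

theorem IntermediateField.mem_or_exists_eq_mul_of_sq_mem [NeZero (2 : L)]
    {E : IntermediateField K L} {t z : L} (ht : IsIntegral K t) (ht2 : t ^ 2 ∈ E)
    (hz : z ∈ K⟮t⟯) (hz2 : z ^ 2 ∈ E) : z ∈ E ∨ ∃ b ∈ E, z = b * t := by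
  by_cases htE : t ∈ E
  · exact .inl (adjoin_simple_le_iff.mpr htE hz)
  obtain ⟨a, ha, b, hb, rfl⟩ := exists_eq_add_mul_of_mem_adjoin_simple ht ht2 hz
  have hcross : 2 * a * b * t ∈ E := by
    rw [show 2 * a * b * t = (a + b * t) ^ 2 - (a ^ 2 + b ^ 2 * t ^ 2) by ring]
    exact sub_mem hz2 (add_mem (pow_mem ha 2) (mul_mem (pow_mem hb 2) ht2))
  have hab : 2 * a * b = 0 := by
    by_contra h
    refine htE ?_
    rw [← inv_mul_cancel_left₀ h t]
    exact mul_mem (inv_mem (mul_mem (mul_mem (ofNat_mem E 2) ha) hb)) hcross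
  rcases mul_eq_zero.mp hab with h | rfl
  · obtain rfl := (mul_eq_zero.mp h).resolve_left two_ne_zero
    exact .inr ⟨b, hb, by ring⟩
  · exact .inl (by simpa using ha)

theorem IntermediateField.two_mul_add_mem_iff [NeZero (2 : L)] (E : IntermediateField K L)
    {a x : L} (ha : a ∈ E) : 2 * x + a ∈ E ↔ x ∈ E := by
  refine ⟨fun h => ?_, fun h => add_mem (mul_mem (ofNat_mem E 2) h) ha⟩
  rw [show x = (2 * x + a - a) / 2 by field_simp; ring]
  exact div_mem (sub_mem h ha) (ofNat_mem E 2)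

theorem IntermediateField.exists_isIntegral_sq_eq_iff_mem (E : IntermediateField K L) {x : L}
    (hx : IsIntegral ℤ x) : (∃ C : E, IsIntegral ℤ C ∧ x ^ 2 = C ^ 2) ↔ x ∈ E :=
  ⟨fun ⟨C, _, hC⟩ => mem_of_sq_eq_sq C.2 hC, fun h => ⟨⟨x, h⟩, coe_isIntegral_iff.1 hx, rfl⟩⟩

end AdjoinSqrt

section QuadraticInteger

variable {L : Type*} [Field L] [CharZero L] {d : ℤ} {s : L}

theorem isIntegral_coeff_minpoly {z : L} (hz : IsIntegral ℤ z) (i : ℕ) :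
    IsIntegral ℤ ((minpoly ℚ z).coeff i) := by
  rw [minpoly.isIntegrallyClosed_eq_field_fractions' ℚ hz, coeff_map]
  exact isIntegral_algebraMap

theorem isIntegral_ratCast_add_mul_iff (hs : s ^ 2 = d) (hs_irr : s ∉ (algebraMap ℚ L).range)
    (x y : ℚ) :
    IsIntegral ℤ ((x : L) + y * s) ↔
      IsIntegral ℤ (2 * x) ∧ IsIntegral ℤ (x ^ 2 - d * y ^ 2) := by
  have hp : aeval ((x : L) + y * s) (X ^ 2 - C (2 * x) * X + C (x ^ 2 - d * y ^ 2)) = 0 := by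
    simp only [map_add, map_sub, map_mul, map_pow, aeval_X, aeval_C, eq_ratCast]
    push_cast
    linear_combination (y : L) ^ 2 * hs
  constructor
  · intro hz
    rcases eq_or_ne y 0 with rfl | hy
    · have hx : IsIntegral ℤ x :=
        (isIntegral_algebraMap_iff (algebraMap ℚ L).injective).mp (by simpa using hz)
      exact ⟨isIntegral_algebraMap.mul hx, by simpa using hx.pow 2⟩
    have hz_irr : (x : L) + y * s ∉ (algebraMap ℚ L).range := by
      rintro ⟨q, hq⟩
      refine hs_irr ⟨(q - x) / y, ?_⟩
      simp only [eq_ratCast] at hq ⊢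
      push_cast
      rw [hq]
      field_simp
      ring
    have hzQ := hz.tower_top (A := ℚ)
    have hmin :
        X ^ 2 - C (2 * x) * X + C (x ^ 2 - d * y ^ 2) = minpoly ℚ ((x : L) + y * s) :=
      eq_of_monic_of_dvd_of_natDegree_le (minpoly.monic hzQ) (by monicity!)
        (minpoly.dvd ℚ _ hp) (by
          rw [show (X ^ 2 - C (2 * x) * X + C (x ^ 2 - d * y ^ 2) : ℚ[X]).natDegree = 2 by
            compute_degree!]
          exact (minpoly.two_le_natDegree_iff hzQ).2 hz_irr)
    have h1 := isIntegral_coeff_minpoly hz 1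
    have h0 := isIntegral_coeff_minpoly hz 0
    simp only [← hmin, coeff_add, coeff_sub, coeff_C_mul, coeff_X_pow, coeff_X, coeff_C]
      at h1 h0
    norm_num at h1 h0
    exact ⟨by simpa using h1.neg, h0⟩
  · rintro ⟨h2x, hN⟩
    refine isIntegral_of_sq_add_mul_add_eq_zero (a := -((2 * x : ℚ) : L))
      (b := ((x ^ 2 - d * y ^ 2 : ℚ) : L)) (by simpa using h2x.algebraMap (B := L)) ?_ ?_
    · simpa using hN.algebraMap (B := L)
    · push_cast
      linear_combination (y : L) ^ 2 * hs

theorem isIntegral_of_isIntegral_sq_mul (hd : Squarefree d) (hs : s ^ 2 = d) {b : L}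
    (hb : b ∈ ℚ⟮s⟯) (h : IsIntegral ℤ (b ^ 2 * s)) : IsIntegral ℤ b := by
  have hs_int : IsIntegral ℤ s := .of_pow two_pos (hs ▸ isIntegral_intCast d)
  by_cases hs_rat : s ∈ (algebraMap ℚ L).range
  · obtain ⟨q, rfl⟩ := hs_rat
    have hq : q ^ 2 = (d : ℚ) := by exact_mod_cast (by simpa using hs : (q : L) ^ 2 = d)
    refine .of_pow two_pos ?_
    rw [show b ^ 2 = b ^ 2 * algebraMap ℚ L q * algebraMap ℚ L q by
      rw [mul_assoc, ← sq, hs, hd.eq_one_of_sq_eq hq, Int.cast_one, mul_one]]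
    exact h.mul hs_int
  have hs2 : s ^ 2 ∈ (⊥ : IntermediateField ℚ L) := hs ▸ intCast_mem ⊥ d
  obtain ⟨_, ⟨u, rfl⟩, _, ⟨v, rfl⟩, rfl⟩ :=
    exists_eq_add_mul_of_mem_adjoin_simple hs_int.tower_top hs2 hb
  simp only [eq_ratCast] at h ⊢
  have h_expand : ((u : L) + v * s) ^ 2 * s =
      ((2 * u * v * d : ℚ) : L) + ((u ^ 2 + d * v ^ 2 : ℚ) : L) * s := by
    push_cast
    linear_combination (2 * u * v + v ^ 2 * s : L) * hs
  rw [h_expand, isIntegral_ratCast_add_mul_iff hs hs_rat] at h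
  obtain ⟨h_tr, h_nm⟩ := h
  have h_norm : IsIntegral ℤ (u ^ 2 - d * v ^ 2) := by
    refine hd.isIntegral_of_isIntegral_mul_sq ?_
    rw [show (d : ℚ) * (u ^ 2 - d * v ^ 2) ^ 2 =
      -((2 * u * v * d) ^ 2 - d * (u ^ 2 + d * v ^ 2) ^ 2) by ring]
    exact h_nm.neg
  have h_coeff : IsIntegral ℤ (2 * (u ^ 2 + d * v ^ 2)) := by
    refine hd.isIntegral_of_isIntegral_mul_sq ?_
    rw [show (d : ℚ) * (2 * (u ^ 2 + d * v ^ 2)) ^ 2 =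
      (2 * (2 * u * v * d)) ^ 2 - 4 * ((2 * u * v * d) ^ 2 - d * (u ^ 2 + d * v ^ 2) ^ 2) by ring]
    exact (h_tr.pow 2).sub ((isIntegral_natCast 4).mul h_nm)
  have h_trace : IsIntegral ℤ (2 * u) := by
    refine .of_pow two_pos ?_
    rw [show (2 * u) ^ 2 = 2 * (u ^ 2 + d * v ^ 2) + 2 * (u ^ 2 - d * v ^ 2) by ring]
    exact h_coeff.add ((isIntegral_natCast 2).mul h_norm)
  exact (isIntegral_ratCast_add_mul_iff hs hs_rat u v).2 ⟨h_trace, h_norm⟩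

theorem exists_isIntegral_sq_eq_or_eq_sq_mul_sq (hd : Squarefree d) {t x : L} (ht : t ^ 4 = d)
    (hx : x ∈ ℚ⟮t⟯) (hx_int : IsIntegral ℤ x) (hx2 : x ^ 2 ∈ ℚ⟮t ^ 2⟯) :
    ∃ C : ℚ⟮t ^ 2⟯, IsIntegral ℤ C ∧ (x ^ 2 = C ^ 2 ∨ x ^ 2 = C ^ 2 * t ^ 2) := by
  have hs : (t ^ 2) ^ 2 = d := by rw [← ht]; ring
  have ht_int : IsIntegral ℚ t := .of_pow four_pos (ht ▸ isIntegral_intCast d)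
  obtain hxF | ⟨b, hb, rfl⟩ :=
    mem_or_exists_eq_mul_of_sq_mem ht_int (mem_adjoin_simple_self ℚ _) hx hx2
  · exact ⟨⟨x, hxF⟩, coe_isIntegral_iff.1 hx_int, .inl rfl⟩
  · refine ⟨⟨b, hb⟩, coe_isIntegral_iff.1 ?_, .inr (mul_pow b t 2)⟩
    exact isIntegral_of_isIntegral_sq_mul hd hs hb (by rw [← mul_pow]; exact hx_int.pow 2)

end QuadraticInteger

theorem integral_quadratic_over_F_discriminant_criterion_general
    (d : ℤ) (hsf : Squarefree d)
    (t : ℂ) (ht : t ^ 4 = (d : ℂ))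
    (F K : IntermediateField ℚ ℂ)
    (hF : F = IntermediateField.adjoin ℚ {t ^ 2})
    (hK : K = IntermediateField.adjoin ℚ {t})
    (A1 A0 : F) (hA1 : IsIntegral ℤ A1) (hA0 : IsIntegral ℤ A0)
    (α : ℂ) (hroot : α ^ 2 + (A1 : ℂ) * α + (A0 : ℂ) = 0) :
    ((α ∈ K ∧ IsIntegral ℤ α) ↔
      ∃ C : F, IsIntegral ℤ C ∧
        ((A1 : ℂ) ^ 2 - 4 * (A0 : ℂ) = (C : ℂ) ^ 2 ∨
         (A1 : ℂ) ^ 2 - 4 * (A0 : ℂ) = (C : ℂ) ^ 2 * t ^ 2)) ∧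
    ((∃ C : F, IsIntegral ℤ C ∧ (A1 : ℂ) ^ 2 - 4 * (A0 : ℂ) = (C : ℂ) ^ 2) → α ∈ F) ∧
    (((∃ C : F, IsIntegral ℤ C ∧ (A1 : ℂ) ^ 2 - 4 * (A0 : ℂ) = (C : ℂ) ^ 2 * t ^ 2) ∧
       ¬ (∃ C : F, IsIntegral ℤ C ∧ (A1 : ℂ) ^ 2 - 4 * (A0 : ℂ) = (C : ℂ) ^ 2)) →
      (α ∈ K ∧ IsIntegral ℤ α ∧ α ∉ F)) := by
  subst hF hK
  have ht_K : t ∈ ℚ⟮t⟯ := mem_adjoin_simple_self ℚ t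
  have hFK : ℚ⟮t ^ 2⟯ ≤ ℚ⟮t⟯ := adjoin_simple_le_iff.2 (pow_mem ht_K 2)
  have hA1_int : IsIntegral ℤ (A1 : ℂ) := coe_isIntegral_iff.2 hA1
  have hα_int : IsIntegral ℤ α :=
    isIntegral_of_sq_add_mul_add_eq_zero hA1_int (coe_isIntegral_iff.2 hA0) hroot
  set β := 2 * α + A1
  have hβ_int : IsIntegral ℤ β := ((isIntegral_natCast 2).mul hα_int).add hA1_int
  have hβ : β ^ 2 = (A1 : ℂ) ^ 2 - 4 * A0 := by linear_combination 4 * hroot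
  have hβ_F : β ^ 2 ∈ ℚ⟮t ^ 2⟯ :=
    hβ ▸ sub_mem (pow_mem A1.2 2) (mul_mem (ofNat_mem _ 4) A0.2)
  have hmem {E : IntermediateField ℚ ℂ} (hE : ℚ⟮t ^ 2⟯ ≤ E) : β ∈ E ↔ α ∈ E :=
    E.two_mul_add_mem_iff (hE A1.2)
  have hsq_F := (exists_isIntegral_sq_eq_iff_mem _ hβ_int).trans (hmem le_rfl)
  have hmem_K (C : ℚ⟮t ^ 2⟯) (hC : β ^ 2 = C ^ 2 ∨ β ^ 2 = C ^ 2 * t ^ 2) : α ∈ ℚ⟮t⟯ := by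
    rw [← hmem hFK]
    rcases hC with hC | hC
    · exact mem_of_sq_eq_sq (hFK C.2) hC
    · exact mem_of_sq_eq_sq (mul_mem (hFK C.2) ht_K) (by rw [hC]; ring)
  rw [← hβ]
  refine ⟨⟨fun ⟨hαK, _⟩ => ?_, fun ⟨C, _, hC⟩ => ⟨hmem_K C hC, hα_int⟩⟩, hsq_F.1,
    fun ⟨⟨C, _, hC⟩, hno⟩ => ⟨hmem_K C (.inr hC), hα_int, mt hsq_F.2 hno⟩⟩
  exact exists_isIntegral_sq_eq_or_eq_sq_mul_sq hsf ht ((hmem hFK).2 hαK) hβ_int hβ_F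

theorem integral_quadratic_over_F_discriminant_criterion
    (d : ℤ) (hodd : Odd d) (hsf : Squarefree d)
    (t : ℂ) (ht : t ^ 4 = (d : ℂ)) (htre : t.im = 0) (htnn : 0 ≤ t.re)
    (F K : IntermediateField ℚ ℂ)
    (hF : F = IntermediateField.adjoin ℚ {t ^ 2})
    (hK : K = IntermediateField.adjoin ℚ {t})
    (A1 A0 : F) (hA1 : IsIntegral ℤ A1) (hA0 : IsIntegral ℤ A0)
    (α : ℂ) (hroot : α ^ 2 + (A1 : ℂ) * α + (A0 : ℂ) = 0) :
    ((α ∈ K ∧ IsIntegral ℤ α) ↔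
      ∃ C : F, IsIntegral ℤ C ∧
        ((A1 : ℂ) ^ 2 - 4 * (A0 : ℂ) = (C : ℂ) ^ 2 ∨
         (A1 : ℂ) ^ 2 - 4 * (A0 : ℂ) = (C : ℂ) ^ 2 * t ^ 2)) ∧
    ((∃ C : F, IsIntegral ℤ C ∧ (A1 : ℂ) ^ 2 - 4 * (A0 : ℂ) = (C : ℂ) ^ 2) → α ∈ F) ∧
    (((∃ C : F, IsIntegral ℤ C ∧ (A1 : ℂ) ^ 2 - 4 * (A0 : ℂ) = (C : ℂ) ^ 2 * t ^ 2) ∧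
       ¬ (∃ C : F, IsIntegral ℤ C ∧ (A1 : ℂ) ^ 2 - 4 * (A0 : ℂ) = (C : ℂ) ^ 2)) →
      (α ∈ K ∧ IsIntegral ℤ α ∧ α ∉ F)) :=
  integral_quadratic_over_F_discriminant_criterion_general d hsf t ht F K hF hK A1 A0 hA1 hA0 α
    hroot
end

section
/- Let d be an odd square-free integer, F = ℚ(√d), K = ℚ(d^{1/4}), and let α > 0 be an element of O_K \ O_F with N_{K/F}(α) = B² for some B ∈ O_F, so that the minimal polynomial of α over F is f(x) = x² - Ax + B² with A = Tr_{K/F}(α). Then there exists C ∈ O_F with C² = A + 2B or C² = A - 2B if and only if √α ∈ O_K. -/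
/-!
Write `√α = x + y t` with `x, y ∈ F`. Then `α = (√α)²` is a root of
`X² - 2(x² + y²t²) X + (x² - y²t²)²`, and since `α ∉ F` this must be `X² - A X + B²`,
so `C = 2x` satisfies `C² = A ± 2B`. Conversely `C² = A + 2B` gives `(α + B)² = C² α`, so
`√α = ±(α + B)/C`; the case `A - 2B` is the same with `-B` in place of `B`.
-/

open IntermediateField Polynomial

theorem IntermediateField.exists_eq_add_mul_of_mem_adjoin_simple_s14 {k L : Type*} [Field k]
    [Field L] [Algebra k L] {t z : L} (hz : z ∈ k⟮t⟯) :
    ∃ x ∈ k⟮t ^ 2⟯, ∃ y ∈ k⟮t ^ 2⟯, z = x + y * t := by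
  set F := k⟮t ^ 2⟯
  have ht2 : t ^ 2 ∈ F := mem_adjoin_simple_self k (t ^ 2)
  have ht : IsIntegral F t :=
    ⟨X ^ 2 - C ⟨t ^ 2, ht2⟩, monic_X_pow_sub_C _ two_ne_zero, by simp⟩
  replace hz : z ∈ Algebra.adjoin F {t} := by
    rw [← adjoin_simple_toSubalgebra_of_isAlgebraic ht.isAlgebraic]
    exact (adjoin_simple_le_iff (K := (F⟮t⟯).restrictScalars k)).mpr
      (mem_adjoin_simple_self F t) hz
  induction hz using Algebra.adjoin_induction with
  | mem s hs =>
    rw [Set.mem_singleton_iff.mp hs]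
    exact ⟨0, zero_mem F, 1, one_mem F, by ring⟩
  | algebraMap r => exact ⟨r, r.2, 0, zero_mem F, by simp⟩
  | add a b _ _ ha hb =>
    obtain ⟨x, hx, y, hy, rfl⟩ := ha
    obtain ⟨x', hx', y', hy', rfl⟩ := hb
    exact ⟨x + x', add_mem hx hx', y + y', add_mem hy hy', by ring⟩
  | mul a b _ _ ha hb =>
    obtain ⟨x, hx, y, hy, rfl⟩ := ha
    obtain ⟨x', hx', y', hy', rfl⟩ := hb
    exact ⟨x * x' + y * y' * t ^ 2, add_mem (mul_mem hx hx') (mul_mem (mul_mem hy hy') ht2),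
      x * y' + y * x', add_mem (mul_mem hx hy') (mul_mem hy hx'), by ring⟩

section SubfieldClass

variable {L S : Type*} [Field L] [SetLike S L] [SubfieldClass S L]

theorem eq_and_eq_of_sq_sub_mul_add_eq_zero {F : S} {α A A' c c' : L} (hα : α ∉ F)
    (hA : A ∈ F) (hA' : A' ∈ F) (hc : c ∈ F) (hc' : c' ∈ F)
    (h : α ^ 2 - A * α + c = 0) (h' : α ^ 2 - A' * α + c' = 0) : A = A' ∧ c = c' := by
  have hAA' : A = A' := by
    by_contra hne
    have hα' : α = (c - c') / (A - A') := by
      rw [eq_div_iff (sub_ne_zero.mpr hne)]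
      linear_combination h' - h
    exact hα (hα' ▸ div_mem (sub_mem hc hc') (sub_mem hA hA'))
  subst hAA'
  exact ⟨rfl, by linear_combination h - h'⟩

theorem mem_of_sq_eq_of_sq_eq_add_two_mul {K : S} {α β A B C : L} (hβ : β ^ 2 = α)
    (hroot : α ^ 2 - A * α + B ^ 2 = 0) (hC : C ^ 2 = A + 2 * B)
    (hα : α ∈ K) (hBK : B ∈ K) (hCK : C ∈ K) (hαB : α + B ≠ 0) : β ∈ K := by
  have key : (α + B) ^ 2 = (C * β) ^ 2 := by
    rw [mul_pow, hβ]
    linear_combination hroot - α * hC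
  have hC0 : C ≠ 0 := by
    rintro rfl
    exact hαB (pow_eq_zero_iff two_ne_zero |>.mp (by simpa using key))
  have hsum : α + B ∈ K := add_mem hα hBK
  rcases sq_eq_sq_iff_eq_or_eq_neg.mp key with h | h
  · rw [show β = (α + B) / C by field_simp; linear_combination -h]
    exact div_mem hsum hCK
  · rw [show β = -(α + B) / C by field_simp; linear_combination h]
    exact div_mem (neg_mem hsum) hCK

theorem exists_sq_eq_add_or_sub_of_eq_add_mul {F : S} {t x y A B : L} (ht : t ^ 2 ∈ F)
    (hx : x ∈ F) (hy : y ∈ F) (hA : A ∈ F) (hB : B ∈ F) (hα : (x + y * t) ^ 2 ∉ F)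
    (hroot : ((x + y * t) ^ 2) ^ 2 - A * (x + y * t) ^ 2 + B ^ 2 = 0) :
    ∃ C ∈ F, C ^ 2 = A + 2 * B ∨ C ^ 2 = A - 2 * B := by
  set n := x ^ 2 - y ^ 2 * t ^ 2 with hn_def
  have hn : n ∈ F := sub_mem (pow_mem hx 2) (mul_mem (pow_mem hy 2) ht)
  have htr : 2 * (x ^ 2 + y ^ 2 * t ^ 2) ∈ F :=
    mul_mem (ofNat_mem F 2) (add_mem (pow_mem hx 2) (mul_mem (pow_mem hy 2) ht))
  have hroot' :
      ((x + y * t) ^ 2) ^ 2 - 2 * (x ^ 2 + y ^ 2 * t ^ 2) * (x + y * t) ^ 2 + n ^ 2 = 0 := by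
    ring
  obtain ⟨hAeq, hBn⟩ := eq_and_eq_of_sq_sub_mul_add_eq_zero hα hA htr (pow_mem hB 2)
    (pow_mem hn 2) hroot hroot'
  refine ⟨2 * x, mul_mem (ofNat_mem F 2) hx, ?_⟩
  rcases sq_eq_sq_iff_eq_or_eq_neg.mp hBn with h | h
  · left; linear_combination -hAeq - 2 * h - 2 * hn_def
  · right; linear_combination -hAeq + 2 * h - 2 * hn_def

end SubfieldClass

theorem sqrt_in_ring_of_integers_iff_general
    (t : ℝ)
    (F K : IntermediateField ℚ ℝ)
    (hF : F = IntermediateField.adjoin ℚ {t ^ 2})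
    (hK : K = IntermediateField.adjoin ℚ {t})
    (α : K) (hint : IsIntegral ℤ α) (hpos : 0 < (α : ℝ)) (hnF : (α : ℝ) ∉ F)
    (A B : F) (hA : IsIntegral ℤ A) (hB : IsIntegral ℤ B)
    (hroot : (α : ℝ) ^ 2 - (A : ℝ) * (α : ℝ) + (B : ℝ) ^ 2 = 0) :
    (∃ C : F, IsIntegral ℤ C ∧
        ((C : ℝ) ^ 2 = (A : ℝ) + 2 * (B : ℝ) ∨ (C : ℝ) ^ 2 = (A : ℝ) - 2 * (B : ℝ))) ↔
      (Real.sqrt (α : ℝ) ∈ K ∧ IsIntegral ℤ (Real.sqrt (α : ℝ))) := by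
  subst hF hK
  have hFK : ℚ⟮t ^ 2⟯ ≤ ℚ⟮t⟯ :=
    adjoin_simple_le_iff.mpr (pow_mem (mem_adjoin_simple_self ℚ t) 2)
  have hβ : √(α : ℝ) ^ 2 = α := Real.sq_sqrt hpos.le
  constructor
  · rintro ⟨C, -, hC⟩
    have hαB (B' : ℝ) (hB' : B' ∈ ℚ⟮t ^ 2⟯) : (α : ℝ) + B' ≠ 0 := fun h =>
      hnF (eq_neg_of_add_eq_zero_left h ▸ neg_mem hB')
    have hβint : IsIntegral ℤ √(α : ℝ) :=
      .of_pow two_pos (by rw [hβ]; exact hint.map (IsScalarTower.toAlgHom ℤ _ ℝ))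
    refine ⟨?_, hβint⟩
    rcases hC with hC | hC
    · exact mem_of_sq_eq_of_sq_eq_add_two_mul hβ hroot hC α.2 (hFK B.2) (hFK C.2) (hαB _ B.2)
    · exact mem_of_sq_eq_of_sq_eq_add_two_mul hβ (by rwa [neg_sq]) (by rw [hC]; ring) α.2
        (neg_mem (hFK B.2)) (hFK C.2) (hαB _ (neg_mem B.2))
  · rintro ⟨hβK, -⟩
    obtain ⟨x, hx, y, hy, hxy⟩ := exists_eq_add_mul_of_mem_adjoin_simple_s14 hβK
    rw [hxy] at hβ
    obtain ⟨C, hCF, hC⟩ := exists_sq_eq_add_or_sub_of_eq_add_mul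
      (mem_adjoin_simple_self ℚ (t ^ 2)) hx hy A.2 B.2 (hβ ▸ hnF) (hβ ▸ hroot)
    refine ⟨⟨C, hCF⟩, .of_pow two_pos ?_, hC⟩
    rcases hC with hC | hC
    · rw [show (⟨C, hCF⟩ : ℚ⟮t ^ 2⟯) ^ 2 = A + B + B from
        Subtype.ext (by push_cast; linear_combination hC)]
      exact (hA.add hB).add hB
    · rw [show (⟨C, hCF⟩ : ℚ⟮t ^ 2⟯) ^ 2 = A - B - B from
        Subtype.ext (by push_cast; linear_combination hC)]
      exact (hA.sub hB).sub hB

theorem sqrt_in_ring_of_integers_iff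
    (d : ℤ) (hodd : Odd d) (hsf : Squarefree d)
    (t : ℝ) (ht : t ^ 4 = (d : ℝ)) (htpos : 0 < t)
    (F K : IntermediateField ℚ ℝ)
    (hF : F = IntermediateField.adjoin ℚ {t ^ 2})
    (hK : K = IntermediateField.adjoin ℚ {t})
    (α : K) (hint : IsIntegral ℤ α) (hpos : 0 < (α : ℝ)) (hnF : (α : ℝ) ∉ F)
    (A B : F) (hA : IsIntegral ℤ A) (hB : IsIntegral ℤ B)
    (hroot : (α : ℝ) ^ 2 - (A : ℝ) * (α : ℝ) + (B : ℝ) ^ 2 = 0) :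
    (∃ C : F, IsIntegral ℤ C ∧
        ((C : ℝ) ^ 2 = (A : ℝ) + 2 * (B : ℝ) ∨ (C : ℝ) ^ 2 = (A : ℝ) - 2 * (B : ℝ))) ↔
      (Real.sqrt (α : ℝ) ∈ K ∧ IsIntegral ℤ (Real.sqrt (α : ℝ))) :=
  sqrt_in_ring_of_integers_iff_general t F K hF hK α hint hpos hnF A B hA hB hroot
end

section
/- Let p ≡ 7 (mod 8) be a positive prime and F = ℚ(√p). Then 2 = U_F · L₂² for the fundamental unit U_F of F and some L₂ ∈ O_F; in particular, the ideal (2) of O_F is the square of the principal ideal (L₂), and √2 ∈ F(√U_F). -/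
/-!
Since `p ≡ 3 (mod 4)`, the ring of integers of `F` is `ℤ[√p]`, and a unit `t + u√p` of it
has norm `t² - p u² = 1` (norm `-1` is impossible mod 4); for the fundamental unit `t, u > 0`.
If `t` is odd, then `u = 2v` and `(t - 1)/2 · (t + 1)/2 = p v²` with coprime factors: either
`(t + 1)/2 = a²`, `(t - 1)/2 = p b²`, so that `U = (a + b√p)²` is a square, contradicting
minimality, or `a² + 1 = p b²`, impossible mod 4. So `t` is even and `(t + 1)(t - 1) = p u²`
with coprime factors; `t + 1 = p b²`, `t - 1 = a²` would give `a² + 2 = p b²`, impossible mod 8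
as `p ≡ 7`. Hence `t + 1 = a²`, `t - 1 = p b²`, `(a + b√p)² = 2U`, and taking conjugates
`2 = U (a - b√p)²`.
-/

open NumberField IntermediateField

/-- `U` is the fundamental unit of the real quadratic field `F`: it is the smallest
unit of `𝓞 F` greater than `1` in the real embedding. -/
def IsFundamentalUnit (F : IntermediateField ℚ ℝ) (U : (𝓞 F)ˣ) : Prop :=
  1 < ((algebraMap (𝓞 F) F (U : 𝓞 F) : F) : ℝ) ∧
  ∀ V : (𝓞 F)ˣ, 1 < ((algebraMap (𝓞 F) F (V : 𝓞 F) : F) : ℝ) →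
    ((algebraMap (𝓞 F) F (U : 𝓞 F) : F) : ℝ) ≤ ((algebraMap (𝓞 F) F (V : 𝓞 F) : F) : ℝ)

theorem Int.sq_add_one_ne_mul_sq {d : ℤ} (hd : d % 4 = 3) (a b : ℤ) :
    a ^ 2 + 1 ≠ d * b ^ 2 := by
  intro h
  have hd4 : (d : ZMod 4) = 3 := by rw [← ZMod.intCast_mod d 4]; norm_num [hd]
  have key : ∀ x y : ZMod 4, x ^ 2 + 1 ≠ 3 * y ^ 2 := by decide
  exact key a b (by simpa [hd4] using congrArg (Int.cast : ℤ → ZMod 4) h)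

theorem Int.sq_add_two_ne_mul_sq {d : ℤ} (hd : d % 8 = 7) (a b : ℤ) :
    a ^ 2 + 2 ≠ d * b ^ 2 := by
  intro h
  have hd8 : (d : ZMod 8) = 7 := by rw [← ZMod.intCast_mod d 8]; norm_num [hd]
  have key : ∀ x y : ZMod 8, x ^ 2 + 2 ≠ 7 * y ^ 2 := by decide
  exact key a b (by simpa [hd8] using congrArg (Int.cast : ℤ → ZMod 8) h)

theorem Int.two_dvd_of_four_dvd_sq_sub_mul_sq {d : ℤ} (hd : d % 4 = 3) {a b : ℤ}
    (h : 4 ∣ a ^ 2 - d * b ^ 2) : 2 ∣ a ∧ 2 ∣ b := by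
  have hd4 : (d : ZMod 4) = 3 := by rw [← ZMod.intCast_mod d 4]; norm_num [hd]
  have key : ∀ x y : ZMod 4, x ^ 2 - 3 * y ^ 2 = 0 → 2 * x = 0 ∧ 2 * y = 0 := by decide
  have h4 := (ZMod.intCast_zmod_eq_zero_iff_dvd _ 4).mpr h
  push_cast [hd4] at h4
  obtain ⟨ha, hb⟩ := key a b h4
  have ha' := (ZMod.intCast_zmod_eq_zero_iff_dvd (2 * a) 4).mp (by exact_mod_cast ha)
  have hb' := (ZMod.intCast_zmod_eq_zero_iff_dvd (2 * b) 4).mp (by exact_mod_cast hb)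
  omega

theorem Int.exists_sq_and_mul_sq_of_isCoprime {p x y u : ℤ} (hp : 0 < p) (hxy : IsCoprime x y)
    (hx : 0 < x) (hy : 0 < y) (h : x * y = p * u ^ 2) (hpy : p ∣ y) :
    ∃ a b : ℤ, x = a ^ 2 ∧ y = p * b ^ 2 ∧ a * b = u := by
  obtain ⟨m, rfl⟩ := hpy
  have hm : 0 < m := pos_of_mul_pos_right hy hp.le
  have hxm : x * m = u ^ 2 := mul_left_cancel₀ hp.ne' (by linear_combination h)
  have hcop : IsCoprime x m := hxy.of_isCoprime_of_dvd_right (dvd_mul_left m p)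
  obtain ⟨a, ha | ha⟩ := Int.sq_of_isCoprime hcop hxm
  swap; · nlinarith [sq_nonneg a]
  obtain ⟨b, hb | hb⟩ := Int.sq_of_isCoprime hcop.symm (by rw [mul_comm, hxm])
  swap; · nlinarith [sq_nonneg b]
  have hab : (a * b) ^ 2 = u ^ 2 := by rw [mul_pow, ← ha, ← hb, hxm]
  rcases sq_eq_sq_iff_eq_or_eq_neg.mp hab with hab | hab
  · exact ⟨a, b, ha, by rw [hb], hab⟩
  · exact ⟨-a, b, by rw [ha, neg_sq], by rw [hb], by linear_combination -hab⟩

theorem Nat.not_isSquare_of_mod_four_eq_three {d : ℕ} (hd : d % 4 = 3) : ¬IsSquare d := by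
  rintro ⟨r, rfl⟩
  have := Nat.mul_mod r r 4
  have : r % 4 < 4 := Nat.mod_lt _ (by norm_num)
  interval_cases r % 4 <;> omega

theorem Rat.exists_intCast_eq_of_squarefree_mul_sq {d : ℕ} (hd : Squarefree d) {q : ℚ} {m : ℤ}
    (h : d * q ^ 2 = m) : ∃ n : ℤ, (n : ℚ) = q := by
  have hnum : (d : ℤ) * q.num ^ 2 = m * q.den ^ 2 := by
    have := congrArg (· * (q.den : ℚ) ^ 2) h
    rw [mul_assoc, ← mul_pow, Rat.mul_den_eq_num] at this
    exact_mod_cast this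
  have hcop : IsCoprime ((q.den : ℤ) ^ 2) (q.num ^ 2) :=
    (Int.isCoprime_iff_gcd_eq_one.mpr (by simpa [Int.gcd] using q.reduced)).symm.pow
  have hdvd : q.den * q.den ∣ d := by
    rw [← sq, ← Int.natCast_dvd_natCast]
    exact_mod_cast hcop.dvd_of_dvd_mul_right (y := (d : ℤ)) ⟨m, by rw [hnum]; ring⟩
  exact ⟨q.num, Rat.coe_int_num_of_den_eq_one (Nat.isUnit_iff.mp (hd _ hdvd))⟩

namespace Zsqrtd

variable {p : ℕ}

theorem re_sq_sub_mul_im_sq_of_norm_eq_one {d : ℤ} {z : ℤ√d} (hz : z.norm = 1) :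
    z.re ^ 2 - d * z.im ^ 2 = 1 := by
  rw [← hz, norm_def]; ring

theorem isSquare_two_mul_of_even_re (hp : p.Prime) (hp8 : p % 8 = 7) {z : ℤ√p}
    (hz : z.norm = 1) (hre : 0 < z.re) (him : 0 < z.im) (heven : Even z.re) :
    IsSquare (2 * z) := by
  have hN := re_sq_sub_mul_im_sq_of_norm_eq_one hz
  obtain ⟨t, u⟩ := z
  obtain ⟨k, hk⟩ := heven
  dsimp only at hre him hk hN
  have hp0 : (0 : ℤ) < p := by have := hp.pos; omega
  have ht : 1 < t := by nlinarith
  have hcop : IsCoprime (t + 1) (t - 1) := ⟨1 - k, k, by rw [hk]; ring⟩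
  have hprod : (t + 1) * (t - 1) = p * u ^ 2 := by linear_combination hN
  rcases (Nat.prime_iff_prime_int.mp hp).dvd_or_dvd ⟨u ^ 2, hprod⟩ with hdvd | hdvd
  · obtain ⟨a, b, ha, hb, -⟩ := Int.exists_sq_and_mul_sq_of_isCoprime (u := u) hp0 hcop.symm
      (by omega) (by omega) (by linear_combination hprod) hdvd
    exact Int.sq_add_two_ne_mul_sq (d := p) (by omega) a b
      (by linear_combination hb - ha) |>.elim
  · obtain ⟨a, b, ha, hb, hab⟩ :=
      Int.exists_sq_and_mul_sq_of_isCoprime hp0 hcop (by omega) (by omega) hprod hdvd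
    refine ⟨⟨a, b⟩, ?_⟩
    ext <;> simp
    · linear_combination ha + hb
    · linear_combination -2 * hab

theorem isSquare_of_odd_re (hp : p.Prime) (hp4 : p % 4 = 3) {z : ℤ√p}
    (hz : z.norm = 1) (hre : 0 < z.re) (him : 0 < z.im) (hodd : Odd z.re) :
    IsSquare z := by
  have hN := re_sq_sub_mul_im_sq_of_norm_eq_one hz
  obtain ⟨t, u⟩ := z
  obtain ⟨s, rfl⟩ := hodd
  dsimp only at hre him hN
  have hp0 : (0 : ℤ) < p := by have := hp.pos; omega
  obtain ⟨v, rfl⟩ : Even u := by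
    have : Even ((p : ℤ) * u ^ 2) := ⟨2 * s * (s + 1), by linear_combination -hN⟩
    have hp_odd : ¬Even (p : ℤ) := Int.not_even_iff_odd.mpr ⟨p / 2, by omega⟩
    exact (Int.even_pow' two_ne_zero).mp ((Int.even_mul.mp this).resolve_left hp_odd)
  have hs : 0 < s := by nlinarith
  have hprod : (s + 1) * s = p * v ^ 2 :=
    mul_left_cancel₀ four_ne_zero (by linear_combination hN)
  have hcop : IsCoprime (s + 1) s := ⟨1, -1, by ring⟩
  rcases (Nat.prime_iff_prime_int.mp hp).dvd_or_dvd ⟨v ^ 2, hprod⟩ with hdvd | hdvd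
  · obtain ⟨a, b, ha, hb, -⟩ := Int.exists_sq_and_mul_sq_of_isCoprime (u := v) hp0 hcop.symm
      (by omega) (by omega) (by linear_combination hprod) hdvd
    exact Int.sq_add_one_ne_mul_sq (d := p) (by omega) a b
      (by linear_combination hb - ha) |>.elim
  · obtain ⟨a, b, ha, hb, hab⟩ :=
      Int.exists_sq_and_mul_sq_of_isCoprime hp0 hcop (by omega) (by omega) hprod hdvd
    refine ⟨⟨a, b⟩, ?_⟩
    ext <;> simp
    · linear_combination ha + hb
    · linear_combination -2 * hab

theorem isSquare_two_mul_or_isSquare (hp : p.Prime) (hp8 : p % 8 = 7) {z : ℤ√p}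
    (hz : z.norm = 1) (hre : 0 < z.re) (him : 0 < z.im) : IsSquare (2 * z) ∨ IsSquare z :=
  (Int.even_or_odd z.re).imp (isSquare_two_mul_of_even_re hp hp8 hz hre him)
    (isSquare_of_odd_re hp (by omega) hz hre him)

variable {d : ℤ}

theorem norm_eq_one_of_isUnit (hd : d % 4 = 3) {z : ℤ√d} (hz : IsUnit z) : z.norm = 1 := by
  rcases Int.natAbs_eq_iff.mp (norm_eq_one_iff.mpr hz) with h | h
  · exact h
  · rw [norm_def] at h
    push_cast at h
    exact (Int.sq_add_one_ne_mul_sq hd z.re z.im (by linear_combination h)).elim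

theorem re_pos_and_im_pos_of_one_lt_toReal (h0 : 0 ≤ d) {z : ℤ√d} (hz : z.norm = 1)
    (h : 1 < toReal h0 z) : 0 < z.re ∧ 0 < z.im := by
  have hconj : toReal h0 z * toReal h0 (star z) = 1 := by
    rw [← map_mul, ← norm_eq_mul_conj, hz]; simp
  have hsqrt : 0 ≤ √(d : ℝ) := Real.sqrt_nonneg _
  have hconj_pos : 0 < toReal h0 (star z) := by nlinarith
  have hconj_lt : toReal h0 (star z) < toReal h0 z := by nlinarith
  simp only [toReal_apply, re_star, im_star, Int.cast_neg] at hconj_pos hconj_lt h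
  constructor
  · have : (0 : ℝ) < z.re := by nlinarith
    exact_mod_cast this
  · have : (0 : ℝ) < z.im := by nlinarith
    exact_mod_cast this

theorem two_eq_mul_star_sq {z w : ℤ√d} (hz : z.norm = 1) (hw : 2 * z = w * w) :
    2 = z * star w ^ 2 := by
  calc 2 = 2 * (z * star z) := by rw [← norm_eq_mul_conj, hz, Int.cast_one, mul_one]
    _ = z * star w ^ 2 := by rw [sq, ← star_mul', ← hw, star_mul', star_ofNat]; ring

end Zsqrtd

theorem exists_eq_add_mul_sqrt_of_mem_adjoin_sqrt {d : ℕ} {x : ℝ} (hx : x ∈ ℚ⟮(√d : ℝ)⟯) :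
    ∃ a b : ℚ, x = a + b * √d := by
  let f : QuadraticAlgebra ℚ d 0 →ₐ[ℚ] ℝ :=
    QuadraticAlgebra.lift ⟨√d, by simp [Real.mul_self_sqrt (Nat.cast_nonneg d)]⟩
  have hint : IsIntegral ℚ (√d : ℝ) :=
    .of_pow two_pos (by rw [Real.sq_sqrt (Nat.cast_nonneg d)]; exact isIntegral_natCast d)
  rw [← mem_toSubalgebra, adjoin_simple_toSubalgebra_of_isAlgebraic hint.isAlgebraic] at hx
  obtain ⟨q, rfl⟩ := Algebra.adjoin_le (S := f.range)
    (Set.singleton_subset_iff.mpr ⟨QuadraticAlgebra.omega, by simp [f]⟩) hx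
  exact ⟨q.re, q.im, by simp [f, Algebra.smul_def]⟩

open Polynomial in
theorem minpoly_ratCast_add_mul_sqrt {d : ℕ} (hd : ¬IsSquare d) {x y : ℚ} (hy : y ≠ 0) :
    minpoly ℚ ((x : ℝ) + y * √d) = X ^ 2 - C (2 * x) * X + C (x ^ 2 - d * y ^ 2) := by
  set α : ℝ := x + y * √d
  have hirr : Irrational α :=
    ((irrational_sqrt_natCast_iff.mpr hd).ratCast_mul hy).ratCast_add x
  have hmonic : (X ^ 2 - C (2 * x) * X + C (x ^ 2 - d * y ^ 2)).Monic := by monicity!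
  have hroot : aeval α (X ^ 2 - C (2 * x) * X + C (x ^ 2 - d * y ^ 2)) = 0 := by
    simp only [map_add, map_sub, map_mul, map_pow, aeval_X, aeval_C, eq_ratCast, α]
    push_cast
    linear_combination (y : ℝ) ^ 2 * Real.mul_self_sqrt (Nat.cast_nonneg d)
  have hint : IsIntegral ℚ α := ⟨_, hmonic, hroot⟩
  refine (eq_of_monic_of_dvd_of_natDegree_le (minpoly.monic hint) hmonic
    (minpoly.dvd ℚ α hroot) ?_).symm
  have hdeg : (X ^ 2 - C (2 * x) * X + C (x ^ 2 - d * y ^ 2)).natDegree = 2 := by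
    compute_degree!
  rw [hdeg, minpoly.two_le_natDegree_iff hint]
  rintro ⟨q, hq⟩
  exact hirr ⟨q, hq⟩

open Polynomial in
theorem exists_intCast_eq_of_isIntegral_add_mul_sqrt {d : ℕ} (hsq : Squarefree d)
    (hd : d % 4 = 3) {x y : ℚ} (h : IsIntegral ℤ ((x : ℝ) + y * √d)) :
    ∃ a b : ℤ, (a : ℚ) = x ∧ (b : ℚ) = y := by
  by_cases hy : y = 0
  · subst hy
    have hx : IsIntegral ℤ x :=
      (isIntegral_algebraMap_iff (algebraMap ℚ ℝ).injective).mp (by simpa using h)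
    obtain ⟨a, ha⟩ := IsIntegrallyClosed.isIntegral_iff.mp hx
    exact ⟨a, 0, ha, by simp⟩
  have hmin := (minpoly_ratCast_add_mul_sqrt (Nat.not_isSquare_of_mod_four_eq_three hd) hy).symm
    |>.trans (minpoly.isIntegrallyClosed_eq_field_fractions' ℚ h)
  obtain ⟨A, hA⟩ : ∃ A : ℤ, (A : ℚ) = 2 * x := by
    refine ⟨-(minpoly ℤ ((x : ℝ) + y * √d)).coeff 1, ?_⟩
    have := congrArg (coeff · 1) hmin
    simp only [coeff_add, coeff_sub, coeff_X_pow, coeff_C_mul, coeff_X, coeff_C, coeff_map] at this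
    norm_num at this
    push_cast
    linarith
  obtain ⟨B, hB⟩ : ∃ B : ℤ, (B : ℚ) = x ^ 2 - d * y ^ 2 := by
    refine ⟨(minpoly ℤ ((x : ℝ) + y * √d)).coeff 0, ?_⟩
    have := congrArg (coeff · 0) hmin
    simp only [coeff_add, coeff_sub, coeff_X_pow, coeff_C_mul, coeff_X, coeff_C, coeff_map] at this
    norm_num at this
    exact this.symm
  obtain ⟨c, hc⟩ := Rat.exists_intCast_eq_of_squarefree_mul_sq hsq (q := 2 * y)
    (m := A ^ 2 - 4 * B) (by push_cast; rw [hA, hB]; ring)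
  obtain ⟨⟨a, rfl⟩, ⟨b, rfl⟩⟩ := Int.two_dvd_of_four_dvd_sq_sub_mul_sq (d := d) (by omega)
    (a := A) (b := c) ⟨B, by qify; rw [hA, hB, hc]; ring⟩
  push_cast at hA hc
  exact ⟨a, b, by linarith, by linarith⟩

section

variable {d : ℕ} {F : IntermediateField ℚ ℝ} (hF : F = ℚ⟮(√d : ℝ)⟯)

noncomputable def sqrtRingOfIntegers : 𝓞 F :=
  ⟨⟨√d, hF ▸ mem_adjoin_simple_self ℚ _⟩, .of_pow two_pos (by
    rw [show (⟨√d, hF ▸ mem_adjoin_simple_self ℚ _⟩ : F) ^ 2 = d from Subtype.ext (by simp)]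
    exact isIntegral_natCast d)⟩

theorem coe_sqrtRingOfIntegers :
    ((algebraMap (𝓞 F) F (sqrtRingOfIntegers hF) : F) : ℝ) = √d := rfl

noncomputable def zsqrtdToRingOfIntegers : ℤ√d →+* 𝓞 F :=
  Zsqrtd.lift ⟨sqrtRingOfIntegers hF, RingOfIntegers.ext <| Subtype.ext <| by
    show √(d : ℝ) * √(d : ℝ) = _
    simp⟩

theorem coe_zsqrtdToRingOfIntegers (z : ℤ√d) :
    ((algebraMap (𝓞 F) F (zsqrtdToRingOfIntegers hF z) : F) : ℝ) =
      Zsqrtd.toReal (Int.natCast_nonneg d) z := by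
  simp [zsqrtdToRingOfIntegers, coe_sqrtRingOfIntegers]

theorem zsqrtdToRingOfIntegers_injective (hd : ¬IsSquare d) :
    Function.Injective (zsqrtdToRingOfIntegers hF) := by
  intro z w h
  refine Zsqrtd.toReal_injective (Int.natCast_nonneg d)
    (fun n hn => hd ⟨n.natAbs, by zify; rw [hn]; simp⟩) ?_
  rw [← coe_zsqrtdToRingOfIntegers hF, ← coe_zsqrtdToRingOfIntegers hF, h]

theorem zsqrtdToRingOfIntegers_surjective (hsq : Squarefree d) (hd : d % 4 = 3) :
    Function.Surjective (zsqrtdToRingOfIntegers hF) := by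
  intro w
  have hw : ((algebraMap (𝓞 F) F w : F) : ℝ) ∈ ℚ⟮(√d : ℝ)⟯ := hF ▸ (algebraMap (𝓞 F) F w).2
  obtain ⟨x, y, hxy⟩ := exists_eq_add_mul_sqrt_of_mem_adjoin_sqrt hw
  have hint : IsIntegral ℤ ((x : ℝ) + y * √d) := hxy ▸ w.isIntegral_coe.algebraMap
  obtain ⟨a, b, rfl, rfl⟩ := exists_intCast_eq_of_isIntegral_add_mul_sqrt hsq hd hint
  refine ⟨⟨a, b⟩, RingOfIntegers.ext (Subtype.ext ?_)⟩
  rw [coe_zsqrtdToRingOfIntegers, hxy]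
  simp

noncomputable def zsqrtdEquivRingOfIntegers (hsq : Squarefree d) (hd : d % 4 = 3) :
    ℤ√d ≃+* 𝓞 F :=
  .ofBijective (zsqrtdToRingOfIntegers hF) ⟨zsqrtdToRingOfIntegers_injective hF
    (Nat.not_isSquare_of_mod_four_eq_three hd), zsqrtdToRingOfIntegers_surjective hF hsq hd⟩

end

theorem IsFundamentalUnit.not_isSquare {F : IntermediateField ℚ ℝ} {U : (𝓞 F)ˣ}
    (hU : IsFundamentalUnit F U) : ¬IsSquare (U : 𝓞 F) := by
  rintro ⟨V, hV⟩
  have hV_unit : IsUnit V := isUnit_of_mul_isUnit_left (hV ▸ U.isUnit)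
  set v : ℝ := ((algebraMap (𝓞 F) F V : F) : ℝ)
  have hUv : ((algebraMap (𝓞 F) F U : F) : ℝ) = |v| * |v| := by
    rw [hV, abs_mul_abs_self]; simp [v]
  have hv : 1 < |v| := by nlinarith [hU.1, abs_nonneg v]
  obtain ⟨W, hW⟩ : ∃ W : (𝓞 F)ˣ, ((algebraMap (𝓞 F) F W : F) : ℝ) = |v| := by
    rcases abs_choice v with h | h
    · exact ⟨hV_unit.unit, by simp [v, h]⟩
    · exact ⟨-hV_unit.unit, by simp [v, h]⟩
  have := hU.2 W (hW ▸ hv)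
  rw [hW, hUv] at this
  nlinarith

theorem Real.sqrt_mem_adjoin_sqrt_of_eq_mul_sq {K : Type*} [Field K] [Algebra K ℝ] {c u l : K}
    (hu : 0 ≤ algebraMap K ℝ u) (h : c = u * l ^ 2) :
    √(algebraMap K ℝ c) ∈ IntermediateField.adjoin K {√(algebraMap K ℝ u)} := by
  rw [h, map_mul, map_pow, Real.sqrt_mul hu, Real.sqrt_sq_eq_abs]
  refine mul_mem (subset_adjoin K _ rfl) ?_
  rcases abs_choice (algebraMap K ℝ l) with hl | hl <;> rw [hl]
  · exact IntermediateField.algebraMap_mem _ l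
  · exact neg_mem (IntermediateField.algebraMap_mem _ l)

theorem two_eq_fundamental_unit_mul_square_general
    (p : ℕ) (hp : p.Prime) (hp8 : p % 8 = 7)
    (F : IntermediateField ℚ ℝ)
    (hF : F = IntermediateField.adjoin ℚ {Real.sqrt p})
    (U : (𝓞 F)ˣ) (hU : IsFundamentalUnit F U) :
    ∃ L2 : 𝓞 F,
      (2 : 𝓞 F) = (U : 𝓞 F) * L2 ^ 2 ∧
      Ideal.span {(2 : 𝓞 F)} = Ideal.span {L2} ^ 2 ∧
      Real.sqrt 2 ∈
        IntermediateField.adjoin F {Real.sqrt ((algebraMap (𝓞 F) F (U : 𝓞 F) : F) : ℝ)} := by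
  let e := zsqrtdEquivRingOfIntegers hF hp.squarefree (by omega)
  set z := e.symm U
  have hzU : e z = U := e.apply_symm_apply _
  have hnorm : z.norm = 1 := Zsqrtd.norm_eq_one_of_isUnit (by omega) (U.isUnit.map e.symm)
  obtain ⟨hre, him⟩ := Zsqrtd.re_pos_and_im_pos_of_one_lt_toReal _ hnorm
    (by rw [← coe_zsqrtdToRingOfIntegers hF]; exact hzU ▸ hU.1)
  rcases Zsqrtd.isSquare_two_mul_or_isSquare hp hp8 hnorm hre him with ⟨w, hw⟩ | hsq
  · have h2 : (2 : 𝓞 F) = U * e (star w) ^ 2 := by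
      rw [← hzU, ← map_pow, ← map_mul, ← Zsqrtd.two_eq_mul_star_sq hnorm hw, map_ofNat]
    refine ⟨e (star w), h2, ?_, ?_⟩
    · rw [Ideal.span_singleton_pow, h2, Ideal.span_singleton_mul_left_unit U.isUnit]
    · have := Real.sqrt_mem_adjoin_sqrt_of_eq_mul_sq (zero_le_one.trans hU.1.le)
        (congrArg (algebraMap (𝓞 F) F) h2)
      rwa [map_ofNat, map_ofNat] at this
  · exact absurd (hzU ▸ hsq.map e) hU.not_isSquare

theorem two_eq_fundamental_unit_mul_square
    (p : ℕ) (hp : p.Prime) (hp8 : p % 8 = 7)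
    (F : IntermediateField ℚ ℝ)
    (hF : F = IntermediateField.adjoin ℚ {Real.sqrt p})
    [NumberField F]
    (U : (𝓞 F)ˣ) (hU : IsFundamentalUnit F U) :
    ∃ L2 : 𝓞 F,
      (2 : 𝓞 F) = (U : 𝓞 F) * L2 ^ 2 ∧
      Ideal.span {(2 : 𝓞 F)} = Ideal.span {L2} ^ 2 ∧
      Real.sqrt 2 ∈
        IntermediateField.adjoin F {Real.sqrt ((algebraMap (𝓞 F) F (U : 𝓞 F) : F) : ℝ)} :=
  two_eq_fundamental_unit_mul_square_general p hp hp8 F hF U hU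
end
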